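/- For any fixed τ > 0 and μ > 0 there exists M ∈ ℕ such that for every integer m ≥ M, (2μ(m²−1) − τ²·j_{m,1}²)·(2μ(m²−1) − τ²·j_{m,2}²) > 0. -/

import Mathlib

/-!
Writing `J_ν(x) = (x/2)^ν g(x²/4)` with `g` an entire power series, the function
`u(x) = x^(ν+1/2) g(x²/4)` solves `u'' = q u` on `x > 0`, `q(x) = (ν² - 1/4)/x² - 1`.
While `x² ≤ ν² - 1/4` we have `q ≥ 0`, so `(u u')' = u'² + q u² ≥ 0`;
as `u u' → 0` at `0`, `u²` is nondecreasing there and `u` has no zero: `j_{ν,s}² ≥ ν² - 1/4`.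
Beyond `x = aν` with `a > 1` we have `q ≤ -((a - 1)/a)²`, and Sturm comparison
with `sin ((a - 1)/a · x)` puts a zero of `u` in every interval of length `πa/(a - 1)`,
so `j_{ν,2} ≤ aν + O_a(1)`.
If `2μ ≤ τ²` the lower bound makes both factors negative; otherwise any `1 < a` with
`a² < 2μ/τ²` makes both positive for large `m`.
-/

/-- Bessel function of the first kind of real order `ν`, defined by its power series. -/
noncomputable def besselJ (ν : ℝ) (x : ℝ) : ℝ :=
  ∑' k : ℕ, ((-1 : ℝ) ^ k / (Nat.factorial k * Real.Gamma ((k : ℝ) + ν + 1))) *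
    (x / 2) ^ (2 * (k : ℝ) + ν)

/-- `besselJZero ν s` is the `s`-th positive zero of `besselJ ν` (with the convention
`besselJZero ν 0 = 0`), defined recursively as the infimum of zeros beyond the previous one. -/
noncomputable def besselJZero (ν : ℝ) : ℕ → ℝ
  | 0 => 0
  | s + 1 => sInf {x : ℝ | besselJZero ν s < x ∧ besselJ ν x = 0}

open Real Set Filter Topology
open scoped Nat

noncomputable def seriesEval (c : ℕ → ℝ) (t : ℝ) : ℝ := ∑' k, c k * t ^ k

def derivCoeff (c : ℕ → ℝ) (k : ℕ) : ℝ := (k + 1) * c (k + 1)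

section FactorialBound

variable {c : ℕ → ℝ} {C : ℝ}

lemma abs_derivCoeff_le (hc : ∀ k, |c k| ≤ C / k !) (k : ℕ) : |derivCoeff c k| ≤ C / k ! := by
  have hk : (0 : ℝ) < k + 1 := by positivity
  calc |derivCoeff c k| = (k + 1) * |c (k + 1)| := by rw [derivCoeff, abs_mul, abs_of_pos hk]
    _ ≤ (k + 1) * (C / (k + 1)!) := by gcongr; exact hc _
    _ = C / k ! := by rw [Nat.factorial_succ]; push_cast; field_simp

lemma summable_mul_pow_of_abs_le (hc : ∀ k, |c k| ≤ C / k !) (t : ℝ) :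
    Summable fun k => c k * t ^ k := by
  refine .of_norm_bounded ((Real.summable_pow_div_factorial |t|).mul_left C) fun k => ?_
  rw [Real.norm_eq_abs, abs_mul, abs_pow]
  calc |c k| * |t| ^ k ≤ C / k ! * |t| ^ k := by gcongr; exact hc k
    _ = C * (|t| ^ k / k !) := by ring

lemma hasDerivAt_seriesEval (hc : ∀ k, |c k| ≤ C / k !) (t : ℝ) :
    HasDerivAt (seriesEval c) (seriesEval (derivCoeff c) t) t := by
  have hc' := summable_mul_pow_of_abs_le (abs_derivCoeff_le hc)
  have hsum (y : ℝ) :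
      HasSum (fun k : ℕ => c k * (k * y ^ (k - 1))) (seriesEval (derivCoeff c) y) := by
    rw [← hasSum_nat_add_iff' 1]
    simpa [seriesEval, derivCoeff, mul_comm, mul_left_comm, mul_assoc] using (hc' y).hasSum
  set R := |t| + 1
  have hR : 0 < R := by positivity
  have hu : Summable fun k : ℕ => |c k * k| * R ^ (k - 1) := by
    rw [← summable_nat_add_iff 1]
    simpa [derivCoeff, abs_mul, mul_comm, abs_of_pos hR] using (hc' R).abs
  have htR : t ∈ Ioo (-R) R := abs_lt.mp (lt_add_one _)
  have hderiv := hasDerivAt_tsum_of_isPreconnected hu isOpen_Ioo isPreconnected_Ioo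
    (fun k y _ => (hasDerivAt_pow k y).const_mul (c k)) (fun k y hy => ?_) htR
    (summable_mul_pow_of_abs_le hc t) htR
  · rwa [(hsum t).tsum_eq] at hderiv
  · rw [Real.norm_eq_abs, ← mul_assoc, abs_mul, abs_pow]
    gcongr
    exact (abs_lt.mpr hy).le

lemma hasSum_mul_seriesEval_derivCoeff {d : ℕ → ℝ} {t : ℝ}
    (hd : Summable fun k => derivCoeff d k * t ^ k) :
    HasSum (fun k : ℕ => k * d k * t ^ k) (t * seriesEval (derivCoeff d) t) := by
  rw [← hasSum_nat_add_iff' 1]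
  simpa [seriesEval, derivCoeff, pow_succ, mul_comm, mul_left_comm, mul_assoc] using
    hd.hasSum.mul_left t

lemma continuous_seriesEval (hc : ∀ k, |c k| ≤ C / k !) :
    Continuous (seriesEval c) :=
  continuous_iff_continuousAt.2 fun t => (hasDerivAt_seriesEval hc t).continuousAt

lemma hasDerivAt_seriesEval_sq_div_four (hc : ∀ k, |c k| ≤ C / k !) (x : ℝ) :
    HasDerivAt (fun y => seriesEval c (y ^ 2 / 4))
      (x / 2 * seriesEval (derivCoeff c) (x ^ 2 / 4)) x := by
  refine ((hasDerivAt_seriesEval hc (x ^ 2 / 4)).comp x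
    ((hasDerivAt_pow 2 x).div_const 4)).congr_deriv ?_
  norm_num
  ring

end FactorialBound

lemma seriesEval_zero (c : ℕ → ℝ) : seriesEval c 0 = c 0 := by
  rw [seriesEval, tsum_eq_single 0 fun k hk => by simp [hk]]
  simp

noncomputable def besselCoeff (ν : ℝ) (k : ℕ) : ℝ := (-1) ^ k / (k ! * Gamma (k + ν + 1))

section BesselSeries

variable {ν : ℝ}

lemma Gamma_add_one_le_Gamma_nat_add (hν : 0 ≤ ν) (k : ℕ) :
    Gamma (ν + 1) ≤ Gamma (k + ν + 1) := by
  induction k with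
  | zero => simp
  | succ k ih =>
    have hk : (1 : ℝ) ≤ k + ν + 1 := by linarith [k.cast_nonneg (α := ℝ)]
    have hG : 0 < Gamma (k + ν + 1) := Gamma_pos_of_pos (by linarith)
    have hrec : Gamma ((k + 1 : ℕ) + ν + 1) = (k + ν + 1) * Gamma (k + ν + 1) := by
      rw [← Gamma_add_one (by linarith)]; push_cast; ring_nf
    rw [hrec]
    nlinarith

lemma abs_besselCoeff_le (hν : 0 ≤ ν) (k : ℕ) :
    |besselCoeff ν k| ≤ (Gamma (ν + 1))⁻¹ / k ! := by
  have hG : 0 < Gamma (ν + 1) := Gamma_pos_of_pos (by linarith)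
  have hle := Gamma_add_one_le_Gamma_nat_add hν k
  calc |besselCoeff ν k| = 1 / (k ! * Gamma (k + ν + 1)) := by
        rw [besselCoeff, abs_div, abs_pow, abs_neg, abs_one, one_pow, abs_of_pos (by positivity)]
    _ ≤ 1 / (k ! * Gamma (ν + 1)) := by gcongr
    _ = (Gamma (ν + 1))⁻¹ / k ! := by ring

lemma besselCoeff_recurrence (hν : -1 < ν) (k : ℕ) :
    (k + ν + 1) * derivCoeff (besselCoeff ν) k = -besselCoeff ν k := by
  have hk : (0 : ℝ) < k + ν + 1 := by linarith [k.cast_nonneg (α := ℝ)]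
  have hG : 0 < Gamma (k + ν + 1) := Gamma_pos_of_pos hk
  rw [derivCoeff, besselCoeff, besselCoeff, Nat.factorial_succ, Nat.cast_succ,
    add_right_comm _ (1 : ℝ), Gamma_add_one hk.ne', pow_succ]
  push_cast
  field_simp

lemma besselSeries_ode (hν : 0 ≤ ν) (t : ℝ) :
    t * seriesEval (derivCoeff (derivCoeff (besselCoeff ν))) t
      + (ν + 1) * seriesEval (derivCoeff (besselCoeff ν)) t + seriesEval (besselCoeff ν) t = 0 := by
  have hc := abs_besselCoeff_le hν
  have h₂ := hasSum_mul_seriesEval_derivCoeff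
    (summable_mul_pow_of_abs_le (abs_derivCoeff_le (abs_derivCoeff_le hc)) t)
  have h₁ := (summable_mul_pow_of_abs_le (abs_derivCoeff_le hc) t).hasSum.mul_left (ν + 1)
  have h₀ := (summable_mul_pow_of_abs_le hc t).hasSum
  refine ((h₂.add h₁).add h₀).unique ?_
  convert hasSum_zero with k
  linear_combination t ^ k * besselCoeff_recurrence (by linarith) k

end BesselSeries

section BesselU

variable {ν : ℝ}

lemma besselJ_eq_rpow_mul_seriesEval {x : ℝ} (hx : 0 < x) :
    besselJ ν x = (x / 2) ^ ν * seriesEval (besselCoeff ν) (x ^ 2 / 4) := by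
  rw [besselJ, seriesEval, ← tsum_mul_left]
  congr 1 with k
  have hpow : (x / 2) ^ (2 * (k : ℝ) + ν) = (x / 2) ^ ν * (x ^ 2 / 4) ^ k := by
    rw [rpow_add (by positivity), show 2 * (k : ℝ) = ((2 * k : ℕ) : ℝ) by push_cast; ring,
      rpow_natCast, pow_mul]
    ring
  rw [hpow, besselCoeff]
  ring

/-- `2^ν √x J_ν(x)` for `x > 0`: Bessel's equation in Liouville normal form. -/
noncomputable def besselU (ν x : ℝ) : ℝ := x ^ (ν + 1 / 2) * seriesEval (besselCoeff ν) (x ^ 2 / 4)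

noncomputable def besselU' (ν x : ℝ) : ℝ :=
  (ν + 1 / 2) * x ^ (ν - 1 / 2) * seriesEval (besselCoeff ν) (x ^ 2 / 4)
    + x ^ (ν + 1 / 2) * (x / 2 * seriesEval (derivCoeff (besselCoeff ν)) (x ^ 2 / 4))

lemma besselJ_eq_zero_iff_besselU {x : ℝ} (hx : 0 < x) : besselJ ν x = 0 ↔ besselU ν x = 0 := by
  rw [besselJ_eq_rpow_mul_seriesEval hx, besselU, mul_eq_zero, mul_eq_zero,
    iff_of_false (rpow_pos_of_pos (by positivity) _).ne' (rpow_pos_of_pos hx _).ne']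

lemma continuous_besselU (hν : 0 ≤ ν) : Continuous (besselU ν) :=
  (continuous_rpow_const (by linarith)).mul
    ((continuous_seriesEval (abs_besselCoeff_le hν)).comp (by fun_prop))

lemma continuous_besselU' (hν : 1 / 2 ≤ ν) : Continuous (besselU' ν) := by
  have hc := abs_besselCoeff_le (by linarith : 0 ≤ ν)
  have h₀ := (continuous_seriesEval hc).comp (f := fun x : ℝ => x ^ 2 / 4) (by fun_prop)
  have h₁ := (continuous_seriesEval (abs_derivCoeff_le hc)).comp
    (f := fun x : ℝ => x ^ 2 / 4) (by fun_prop)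
  exact (continuous_const.mul (continuous_rpow_const (by linarith))).mul h₀ |>.add
    ((continuous_rpow_const (by linarith)).mul (continuous_id.div_const 2 |>.mul h₁))

lemma besselU_zero (hν : 0 ≤ ν) : besselU ν 0 = 0 := by
  rw [besselU, zero_rpow (by linarith), zero_mul]

lemma hasDerivAt_besselU (hν : 0 ≤ ν) {x : ℝ} (hx : 0 < x) :
    HasDerivAt (besselU ν) (besselU' ν x) x := by
  refine ((hasDerivAt_rpow_const (p := ν + 1 / 2) (Or.inl hx.ne')).mul
    (hasDerivAt_seriesEval_sq_div_four (abs_besselCoeff_le hν) x)).congr_deriv ?_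
  rw [besselU']
  ring_nf

lemma hasDerivAt_besselU' (hν : 0 ≤ ν) {x : ℝ} (hx : 0 < x) :
    HasDerivAt (besselU' ν) (((ν ^ 2 - 1 / 4) / x ^ 2 - 1) * besselU ν x) x := by
  have hc := abs_besselCoeff_le hν
  have hG := hasDerivAt_seriesEval_sq_div_four hc x
  have hG₁ := hasDerivAt_seriesEval_sq_div_four (abs_derivCoeff_le hc) x
  have hP (p : ℝ) : HasDerivAt (fun y => y ^ p) (p * x ^ (p - 1)) x :=
    hasDerivAt_rpow_const (Or.inl hx.ne')
  have h := (((hP (ν - 1 / 2)).const_mul (ν + 1 / 2)).mul hG).add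
    ((hP (ν + 1 / 2)).mul (((hasDerivAt_id x).div_const 2).mul hG₁))
  refine h.congr_deriv ?_
  simp only [Pi.mul_apply, id]
  have hode := besselSeries_ode hν (x ^ 2 / 4)
  have hpow₁ : x ^ (ν - 1 / 2) = x ^ (ν - 1 / 2 - 1) * x := by
    rw [← rpow_add_one hx.ne']; ring_nf
  have hpow₂ : x ^ (ν + 1 / 2) = x ^ (ν - 1 / 2 - 1) * x * x := by
    rw [← rpow_add_one hx.ne', ← rpow_add_one hx.ne']; ring_nf
  have hpow₃ : x ^ (ν + 1 / 2 - 1) = x ^ (ν - 1 / 2 - 1) * x := by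
    rw [← rpow_add_one hx.ne']; ring_nf
  rw [besselU, hpow₃, hpow₂, hpow₁]
  set X := x ^ (ν - 1 / 2 - 1)
  rw [show ((ν ^ 2 - 1 / 4) / x ^ 2 - 1) * (X * x * x * seriesEval (besselCoeff ν) (x ^ 2 / 4))
      = (ν ^ 2 - 1 / 4) * X * seriesEval (besselCoeff ν) (x ^ 2 / 4)
        - X * x ^ 2 * seriesEval (besselCoeff ν) (x ^ 2 / 4) by field_simp]
  linear_combination (X * x ^ 2) * hode

end BesselU

section SecondOrderODE

variable {u u' q : ℝ → ℝ}

/-- `(u u')' = u'² + q u² ≥ 0` and `u u'` starts at `0`, so `(u²)' = 2 u u' ≥ 0`. -/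
lemma sq_monotoneOn_of_hasDerivAt_of_nonneg {a b : ℝ} (hu : ContinuousOn u (Icc a b))
    (hu' : ContinuousOn u' (Icc a b)) (ha : u a = 0)
    (hderiv : ∀ x ∈ Ioo a b, HasDerivAt u (u' x) x)
    (hderiv' : ∀ x ∈ Ioo a b, HasDerivAt u' (q x * u x) x) (hq : ∀ x ∈ Ioo a b, 0 ≤ q x) :
    MonotoneOn (fun x => u x ^ 2) (Icc a b) := by
  have hw : MonotoneOn (fun x => u x * u' x) (Icc a b) := by
    refine monotoneOn_of_hasDerivWithinAt_nonneg (convex_Icc a b) (hu.mul hu')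
      (fun x hx => ?_) (fun x hx => ?_) (f' := fun x => u' x * u' x + u x * (q x * u x))
    · rw [interior_Icc] at hx
      exact ((hderiv x hx).mul (hderiv' x hx)).hasDerivWithinAt
    · rw [interior_Icc] at hx
      nlinarith [mul_self_nonneg (u' x), mul_nonneg (hq x hx) (mul_self_nonneg (u x))]
  refine monotoneOn_of_hasDerivWithinAt_nonneg (convex_Icc a b) (hu.pow 2)
    (fun x hx => ?_) (fun x hx => ?_) (f' := fun x => 2 * (u x * u' x))
  · rw [interior_Icc] at hx
    exact ((hderiv x hx).pow 2).hasDerivWithinAt.congr_deriv (by ring)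
  · rw [interior_Icc] at hx
    have hax : a ≤ x := hx.1.le
    have := hw ⟨le_rfl, hax.trans hx.2.le⟩ (Ioo_subset_Icc_self hx) hax
    simp only [ha, zero_mul] at this
    linarith

lemma forall_pos_of_forall_ne_zero {f : ℝ → ℝ} {a b : ℝ} (hf : ContinuousOn f (Icc a b))
    (hne : ∀ x ∈ Icc a b, f x ≠ 0) (ha : 0 < f a) : ∀ x ∈ Icc a b, 0 < f x := by
  intro x hx
  by_contra! h
  obtain ⟨z, hz, hz0⟩ :=
    intermediate_value_Icc' hx.1 (hf.mono (Icc_subset_Icc_right hx.2)) ⟨h, ha.le⟩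
  exact hne z ⟨hz.1, hz.2.trans hx.2⟩ hz0

lemma not_forall_pos_of_hasDerivAt_of_sq_le {c κ : ℝ} (hκ : 0 < κ)
    (hderiv : ∀ x ∈ Icc c (c + π / κ), HasDerivAt u (u' x) x)
    (hderiv' : ∀ x ∈ Icc c (c + π / κ), HasDerivAt u' (-(q x * u x)) x)
    (hq : ∀ x ∈ Icc c (c + π / κ), κ ^ 2 ≤ q x) :
    ¬ ∀ x ∈ Icc c (c + π / κ), 0 < u x := by
  intro hpos
  set d := c + π / κ
  have hcd : c ≤ d := le_add_of_nonneg_right (div_pos pi_pos hκ).le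
  have hκd : κ * (d - c) = π := by simp only [d]; field_simp; ring
  -- the Wronskian of `u` and `sin (κ (x - c))`: nondecreasing, yet it runs from `κ u c > 0`
  -- to `-κ u d < 0`
  let W x := u x * (κ * cos (κ * (x - c))) - u' x * sin (κ * (x - c))
  have hW (x) (hx : x ∈ Icc c d) :
      HasDerivAt W ((q x - κ ^ 2) * (u x * sin (κ * (x - c)))) x := by
    have hθ : HasDerivAt (fun y => κ * (y - c)) κ x := by
      simpa using ((hasDerivAt_id x).sub_const c).const_mul κ
    refine (((hderiv x hx).mul (((hasDerivAt_cos _).comp x hθ).const_mul κ)).sub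
      ((hderiv' x hx).mul ((hasDerivAt_sin _).comp x hθ))).congr_deriv ?_
    simp only [Function.comp_def]
    ring
  have hWmono : MonotoneOn W (Icc c d) := by
    refine monotoneOn_of_hasDerivWithinAt_nonneg (convex_Icc c d)
      (fun x hx => (hW x hx).continuousAt.continuousWithinAt)
      (fun x hx => ?_) (fun x hx => ?_)
      (f' := fun x => (q x - κ ^ 2) * (u x * sin (κ * (x - c))))
    · rw [interior_Icc] at hx
      exact (hW x (Ioo_subset_Icc_self hx)).hasDerivWithinAt
    · rw [interior_Icc] at hx
      have hx' := Ioo_subset_Icc_self hx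
      have hsin : 0 ≤ sin (κ * (x - c)) := sin_nonneg_of_nonneg_of_le_pi
        (mul_nonneg hκ.le (by linarith [hx.1]))
        (hκd ▸ mul_le_mul_of_nonneg_left (by linarith [hx.2]) hκ.le)
      have := hpos x hx'
      have := sub_nonneg.2 (hq x hx')
      positivity
  have hWcd := hWmono ⟨le_rfl, hcd⟩ ⟨hcd, le_rfl⟩ hcd
  simp only [W, sub_self, mul_zero, cos_zero, sin_zero, hκd, cos_pi, sin_pi] at hWcd
  nlinarith [hpos c ⟨le_rfl, hcd⟩, hpos d ⟨hcd, le_rfl⟩]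

lemma exists_zero_of_hasDerivAt_of_sq_le {c κ : ℝ} (hκ : 0 < κ)
    (hderiv : ∀ x ∈ Icc c (c + π / κ), HasDerivAt u (u' x) x)
    (hderiv' : ∀ x ∈ Icc c (c + π / κ), HasDerivAt u' (-(q x * u x)) x)
    (hq : ∀ x ∈ Icc c (c + π / κ), κ ^ 2 ≤ q x) :
    ∃ z ∈ Icc c (c + π / κ), u z = 0 := by
  by_contra! hne
  have hcont : ContinuousOn u (Icc c (c + π / κ)) :=
    fun x hx => (hderiv x hx).continuousAt.continuousWithinAt
  have hc : c ∈ Icc c (c + π / κ) := ⟨le_rfl, le_add_of_nonneg_right (div_pos pi_pos hκ).le⟩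
  rcases (hne c hc).lt_or_gt with hneg | hpos
  · refine not_forall_pos_of_hasDerivAt_of_sq_le (u := -u) (u' := -u') hκ
      (fun x hx => (hderiv x hx).neg) (fun x hx => ?_) hq
      (forall_pos_of_forall_ne_zero hcont.neg (fun x hx => neg_ne_zero.2 (hne x hx))
        (neg_pos.2 hneg))
    simpa using (hderiv' x hx).neg
  · exact not_forall_pos_of_hasDerivAt_of_sq_le hκ hderiv hderiv' hq
      (forall_pos_of_forall_ne_zero hcont hne hpos)

end SecondOrderODE

section BesselZeros

variable {ν : ℝ}

lemma besselJ_ne_zero_of_sq_le (hν : 1 / 2 ≤ ν) {x : ℝ} (hx : 0 < x)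
    (hxν : x ^ 2 ≤ ν ^ 2 - 1 / 4) : besselJ ν x ≠ 0 := by
  have hν₀ : 0 ≤ ν := by linarith
  have hc := abs_besselCoeff_le hν₀
  rw [Ne, besselJ_eq_zero_iff_besselU hx]
  intro hux
  have hmono : MonotoneOn (fun y => besselU ν y ^ 2) (Icc 0 x) := by
    refine sq_monotoneOn_of_hasDerivAt_of_nonneg (continuous_besselU hν₀).continuousOn
      (continuous_besselU' hν).continuousOn (besselU_zero hν₀)
      (fun y hy => hasDerivAt_besselU hν₀ hy.1) (fun y hy => hasDerivAt_besselU' hν₀ hy.1)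
      (fun y hy => ?_)
    have hy2 : y ^ 2 < x ^ 2 := pow_lt_pow_left₀ hy.2 hy.1.le two_ne_zero
    rw [sub_nonneg, one_le_div₀ (pow_pos hy.1 2)]
    linarith
  have hvanish : ∀ y ∈ Ioc 0 x, seriesEval (besselCoeff ν) (y ^ 2 / 4) = 0 := by
    intro y hy
    have hle : besselU ν y ^ 2 ≤ 0 := by simpa [hux] using hmono ⟨hy.1.le, hy.2⟩ ⟨hx.le, le_rfl⟩ hy.2
    have huy := pow_eq_zero_iff two_ne_zero |>.1 (le_antisymm hle (sq_nonneg _))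
    exact (mul_eq_zero.1 huy).resolve_left (rpow_pos_of_pos hy.1 _).ne'
  have hG₀ : seriesEval (besselCoeff ν) (0 ^ 2 / 4) ≠ 0 := by
    rw [zero_pow two_ne_zero, zero_div, seriesEval_zero, besselCoeff]
    simp [(Gamma_pos_of_pos (by linarith : 0 < ν + 1)).ne']
  have hnear : ∀ᶠ y in 𝓝[>] 0, seriesEval (besselCoeff ν) (y ^ 2 / 4) ≠ 0 :=
    ((((continuous_seriesEval hc).comp (by fun_prop : Continuous fun y : ℝ => y ^ 2 / 4)).tendsto
      0).eventually_ne hG₀).filter_mono nhdsWithin_le_nhds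
  obtain ⟨y, hy, hne⟩ := (hnear.and (Ioc_mem_nhdsGT hx)).exists
  exact hy (hvanish y hne)

lemma exists_besselJ_eq_zero_mem_Icc (hν : 0 ≤ ν) {c κ : ℝ} (hκ : 0 < κ) (hc : 0 < c)
    (hcν : ν ^ 2 ≤ (1 - κ ^ 2) * c ^ 2) : ∃ z ∈ Icc c (c + π / κ), besselJ ν z = 0 := by
  have hpos (x : ℝ) (hx : x ∈ Icc c (c + π / κ)) : 0 < x := hc.trans_le hx.1
  have hκ₁ : 0 ≤ 1 - κ ^ 2 := by nlinarith [sq_nonneg ν, pow_pos hc 2]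
  have hq (x : ℝ) (hx : x ∈ Icc c (c + π / κ)) : κ ^ 2 ≤ 1 - (ν ^ 2 - 1 / 4) / x ^ 2 := by
    have hcx : (1 - κ ^ 2) * c ^ 2 ≤ (1 - κ ^ 2) * x ^ 2 := by gcongr; exact hx.1
    rw [le_sub_comm, div_le_iff₀ (pow_pos (hpos x hx) 2)]
    linarith
  obtain ⟨z, hz, hz0⟩ := exists_zero_of_hasDerivAt_of_sq_le hκ
    (fun x hx => hasDerivAt_besselU hν (hpos x hx))
    (fun x hx => (hasDerivAt_besselU' hν (hpos x hx)).congr_deriv (by ring)) hq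
  exact ⟨z, hz, (besselJ_eq_zero_iff_besselU (hpos z hz)).2 hz0⟩

lemma exists_two_besselJ_eq_zero (hν : 0 < ν) {a : ℝ} (ha : 1 < a) :
    ∃ z₁ z₂, 0 < z₁ ∧ z₁ < z₂ ∧ z₂ ≤ a * ν + 3 * (π * a / (a - 1)) ∧
      besselJ ν z₁ = 0 ∧ besselJ ν z₂ = 0 := by
  have hκ : 0 < (a - 1) / a := div_pos (by linarith) (by linarith)
  have hL : π / ((a - 1) / a) = π * a / (a - 1) := by field_simp
  have hL₀ : 0 < π * a / (a - 1) := by have := pi_pos; apply div_pos <;> nlinarith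
  have hzero (c : ℝ) (hc : a * ν ≤ c) :
      ∃ z ∈ Icc c (c + π * a / (a - 1)), besselJ ν z = 0 := by
    rw [← hL]
    refine exists_besselJ_eq_zero_mem_Icc hν.le hκ (by nlinarith) ?_
    have hac : (a * ν) ^ 2 ≤ c ^ 2 := pow_le_pow_left₀ (by nlinarith) hc 2
    have h1 : 1 - ((a - 1) / a) ^ 2 = (2 * a - 1) / a ^ 2 := by field_simp; ring
    rw [h1, div_mul_eq_mul_div, le_div_iff₀ (by positivity)]
    nlinarith
  obtain ⟨z₁, hz₁, hJ₁⟩ := hzero (a * ν) le_rfl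
  obtain ⟨z₂, hz₂, hJ₂⟩ := hzero (a * ν + 2 * (π * a / (a - 1))) (by linarith)
  exact ⟨z₁, z₂, by nlinarith [hz₁.1], by linarith [hz₁.2, hz₂.1], by linarith [hz₂.2], hJ₁, hJ₂⟩

lemma besselJZero_nonneg (ν : ℝ) : ∀ s, 0 ≤ besselJZero ν s
  | 0 => le_rfl
  | s + 1 => Real.sInf_nonneg fun _ hx => (besselJZero_nonneg ν s).trans hx.1.le

lemma besselJZero_succ_le {s : ℕ} {z : ℝ} (hz : besselJZero ν s < z) (hJ : besselJ ν z = 0) :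
    besselJZero ν (s + 1) ≤ z :=
  csInf_le ⟨besselJZero ν s, fun _ hx => hx.1.le⟩ ⟨hz, hJ⟩

lemma le_besselJZero_succ {s : ℕ} {b z : ℝ} (hb : ∀ x, 0 < x → besselJ ν x = 0 → b ≤ x)
    (hz : besselJZero ν s < z) (hJ : besselJ ν z = 0) : b ≤ besselJZero ν (s + 1) :=
  le_csInf ⟨z, hz, hJ⟩ fun x hx => hb x ((besselJZero_nonneg ν s).trans_lt hx.1) hx.2

lemma besselJZero_bounds (hν : 1 / 2 ≤ ν) {a : ℝ} (ha : 1 < a) {s : ℕ} (hs : s = 1 ∨ s = 2) :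
    ν ^ 2 - 1 / 4 ≤ besselJZero ν s ^ 2 ∧ besselJZero ν s ≤ a * ν + 3 * (π * a / (a - 1)) := by
  obtain ⟨z₁, z₂, hz₁, hz₁₂, hz₂, hJ₁, hJ₂⟩ := exists_two_besselJ_eq_zero (ν := ν) (by linarith) ha
  have hj₁ : besselJZero ν 1 ≤ z₁ := besselJZero_succ_le hz₁ hJ₁
  have hj₂ : besselJZero ν 2 ≤ z₂ := besselJZero_succ_le (hj₁.trans_lt hz₁₂) hJ₂
  have hb : ∀ x, 0 < x → besselJ ν x = 0 → √(ν ^ 2 - 1 / 4) ≤ x := fun x hx hJ => by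
    by_contra! hlt
    exact besselJ_ne_zero_of_sq_le hν hx ((lt_sqrt hx.le).1 hlt).le hJ
  rcases hs with rfl | rfl
  · exact ⟨(sqrt_le_iff.1 (le_besselJZero_succ hb hz₁ hJ₁)).2, by linarith⟩
  · exact ⟨(sqrt_le_iff.1 (le_besselJZero_succ hb (hj₁.trans_lt hz₁₂) hJ₂)).2, by linarith⟩

end BesselZeros

lemma eventually_sq_add_lt_mul {a r : ℝ} (D : ℝ) (h : a ^ 2 < r) :
    ∀ᶠ x : ℝ in atTop, (a * x + D) ^ 2 < r * (x ^ 2 - 1) := by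
  have hε : 0 < r - a ^ 2 := sub_pos.2 h
  filter_upwards [eventually_ge_atTop ((|2 * a * D| + D ^ 2 + r) / (r - a ^ 2) + 1),
    eventually_ge_atTop 1] with x hx hx₁
  have hK : |2 * a * D| + D ^ 2 + r < (r - a ^ 2) * x := by
    rw [← div_lt_iff₀' hε]; linarith
  nlinarith [le_abs_self (2 * a * D), sq_nonneg a]

lemma sub_sq_mul_besselJZero_sq_neg {τ μ ν : ℝ} (hτ : 0 < τ) (hle : 2 * μ ≤ τ ^ 2) (hν : 1 ≤ ν)
    {s : ℕ} (hs : s = 1 ∨ s = 2) : 2 * μ * (ν ^ 2 - 1) - τ ^ 2 * besselJZero ν s ^ 2 < 0 := by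
  have hj := (besselJZero_bounds (ν := ν) (by linarith) one_lt_two hs).1
  have h₁ := mul_le_mul_of_nonneg_right hle (by nlinarith : 0 ≤ ν ^ 2 - 1)
  have h₂ := mul_le_mul_of_nonneg_left hj (sq_nonneg τ)
  nlinarith [pow_pos hτ 2]

lemma eventually_sub_sq_mul_besselJZero_sq_pos {τ μ : ℝ} (hτ : 0 < τ) (hlt : τ ^ 2 < 2 * μ) :
    ∀ᶠ ν : ℝ in atTop, ∀ s : ℕ, s = 1 ∨ s = 2 →
      0 < 2 * μ * (ν ^ 2 - 1) - τ ^ 2 * besselJZero ν s ^ 2 := by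
  set r := 2 * μ / τ ^ 2
  have hτr : τ ^ 2 * r = 2 * μ := by simp only [r]; field_simp
  have hr : 1 < r := by rw [lt_div_iff₀ (by positivity)]; linarith
  -- any `1 < a < √r` would do; this one avoids square roots
  set a := 2 * r / (1 + r)
  have ha : 1 < a := by rw [lt_div_iff₀ (by linarith)]; linarith
  have har : a ^ 2 < r := by
    rw [div_pow, div_lt_iff₀ (by positivity)]; nlinarith [sq_pos_of_pos (sub_pos.2 hr)]
  filter_upwards [eventually_sq_add_lt_mul (3 * (π * a / (a - 1))) har, eventually_ge_atTop 1]
    with ν hquad hν s hs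
  have hj := pow_le_pow_left₀ (besselJZero_nonneg ν s)
    (besselJZero_bounds (ν := ν) (by linarith) ha hs).2 2
  nlinarith

theorem bessel_zero_quadratic_product_pos_general
    (τ μ : ℝ) (hτ : 0 < τ) :
    ∃ M : ℕ, ∀ m : ℕ, M ≤ m →
      0 < (2 * μ * ((m : ℝ) ^ 2 - 1) - τ ^ 2 * besselJZero (m : ℝ) 1 ^ 2) *
          (2 * μ * ((m : ℝ) ^ 2 - 1) - τ ^ 2 * besselJZero (m : ℝ) 2 ^ 2) := by
  rcases le_or_gt (2 * μ) (τ ^ 2) with hle | hlt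
  · refine ⟨1, fun m hm => mul_pos_of_neg_of_neg ?_ ?_⟩ <;>
      exact sub_sq_mul_besselJZero_sq_neg hτ hle (by exact_mod_cast hm) (by simp)
  · obtain ⟨M, hM⟩ := eventually_atTop.1 <|
      tendsto_natCast_atTop_atTop.eventually (eventually_sub_sq_mul_besselJZero_sq_pos hτ hlt)
    exact ⟨M, fun m hm => mul_pos (hM m hm 1 (.inl rfl)) (hM m hm 2 (.inr rfl))⟩

/-- For any fixed `τ > 0` and `μ > 0`, for all sufficiently large `m` the product
`(2μ(m²−1) − τ² j_{m,1}²)(2μ(m²−1) − τ² j_{m,2}²)` is positive. -/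
theorem bessel_zero_quadratic_product_pos
    (τ μ : ℝ) (hτ : 0 < τ) (hμ : 0 < μ) :
    ∃ M : ℕ, ∀ m : ℕ, M ≤ m →
      0 < (2 * μ * ((m : ℝ) ^ 2 - 1) - τ ^ 2 * besselJZero (m : ℝ) 1 ^ 2) *
          (2 * μ * ((m : ℝ) ^ 2 - 1) - τ ^ 2 * besselJZero (m : ℝ) 2 ^ 2) :=
  bessel_zero_quadratic_product_pos_general τ μ hτ
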